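/- Let a > 0 and for x > 0 define Q̄_a^{[S]}(x) := a^a if x ≤ a and Q̄_a^{[S]}(x) := x^a/(x−a+1) if x > a; Q̄_a^{[1]}(x) := (x+1)^{a−1}; Q̄_a^{[2]}(x) := x^{a−1} + (a−1)(x+1)^{a−2}. Then for all x > 0: if a ∈ (0,1] ∪ [2,3] then Γ(a) e^x Ḡ_a(x) ≥ Q̄_a^{[1]}(x); if a ∈ [1,2] then Γ(a) e^x Ḡ_a(x) ≤ Q̄_a^{[1]}(x); if a ∈ (0,1] ∪ [2,3] then Γ(a) e^x Ḡ_a(x) ≤ Q̄_a^{[2]}(x); if a ∈ [1,2] ∪ [3,∞) then Γ(a) e^x Ḡ_a(x) ≥ Q̄_a^{[2]}(x); and if a ∈ [3,∞) then Γ(a) e^x Ḡ_a(x) ≤ Q̄_a^{[S]}(x). -/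

import Mathlib

/-!
Substituting `t = x + s`, `Γ(a) eˣ Ḡ_a(x) = J_a(x) := ∫₀^∞ (x + s)^(a-1) e^(-s) ds` is the mean of
`(x + S)^(a-1)` for `S ~ Exp(1)`, a law with mean `1`. The tangent line of `t ↦ t^(a-1)` at `x + 1`
integrates to `(x + 1)^(a-1)`, so (Jensen) this is a lower bound for `J_a(x)` where `t^(a-1)` is
convex (`a ≤ 1` or `2 ≤ a`) and an upper bound where it is concave (`1 ≤ a ≤ 2`). Integration by
parts gives `J_a(x) = x^(a-1) + (a-1) J_{a-1}(x)`, which turns these bounds for `J_{a-1}` into the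
bounds by `Q̄^[2]`. For `x > a - 1 ≥ 0`, `x^a e^(-x) / (x - a + 1)` is the tail integral of a
function dominating `t^(a-1) e^(-t)`; for `x ≤ a` it remains to note that `J_a` is increasing.
-/

open MeasureTheory

/-- Distribution function of the gamma distribution with shape `a` and scale 1:
`G_a(x) = Γ(a)⁻¹ ∫₀ˣ t^{a-1} e^{-t} dt`. -/
noncomputable def gammaCDF (a x : ℝ) : ℝ :=
  (Real.Gamma a)⁻¹ * ∫ t in (0:ℝ)..x, t ^ (a - 1) * Real.exp (-t)

/-- Survival function of the gamma distribution with shape `a` and scale 1. -/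
noncomputable def gammaSurv (a x : ℝ) : ℝ := 1 - gammaCDF a x

open Set Filter Real Topology

theorem setIntegral_Ioi_eq_integral_Ioi_zero_add {E : Type*} [NormedAddCommGroup E]
    [NormedSpace ℝ E] (f : ℝ → E) (x : ℝ) :
    ∫ t in Ioi x, f t = ∫ s in Ioi 0, f (x + s) := by
  have h := (measurePreserving_add_left (volume : Measure ℝ) x).setIntegral_preimage_emb
    (measurableEmbedding_addLeft x) f (Ioi x)
  rw [← h]
  congr 1
  ext s; simp

theorem integrableOn_Ioi_iff_integrableOn_Ioi_zero_add {E : Type*} [NormedAddCommGroup E]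
    (f : ℝ → E) (x : ℝ) :
    IntegrableOn f (Ioi x) ↔ IntegrableOn (fun s => f (x + s)) (Ioi 0) := by
  have h := (measurePreserving_add_left (volume : Measure ℝ) x).integrableOn_comp_preimage
    (measurableEmbedding_addLeft x) (f := f) (s := Ioi x)
  rw [← h]
  have : (fun s => x + s) ⁻¹' Ioi x = Ioi 0 := by ext s; simp
  simp [Function.comp_def, this]

theorem integral_Ioi_zero_mul_exp_neg : ∫ s in Ioi (0 : ℝ), s * exp (-s) = 1 := by
  have h := Gamma_eq_integral two_pos
  rw [Gamma_two] at h
  rw [h]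
  refine setIntegral_congr_fun measurableSet_Ioi fun s _ => ?_
  norm_num [mul_comm]

theorem integrableOn_Ioi_zero_mul_exp_neg : IntegrableOn (fun s : ℝ => s * exp (-s)) (Ioi 0) := by
  refine (GammaIntegral_convergent two_pos).congr_fun (fun s _ => ?_) measurableSet_Ioi
  norm_num [mul_comm]

theorem integrableOn_Ioi_exp_neg : IntegrableOn (fun s : ℝ => exp (-s)) (Ioi 0) := by
  simpa using exp_neg_integrableOn_Ioi 0 one_pos

theorem integrableOn_affine_mul_exp_neg (A B : ℝ) :
    IntegrableOn (fun s : ℝ => (A + B * (s - 1)) * exp (-s)) (Ioi 0) := by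
  have h := (integrableOn_Ioi_exp_neg.const_mul (A - B)).add
    (integrableOn_Ioi_zero_mul_exp_neg.const_mul B)
  exact IntegrableOn.congr_fun h (fun s _ => by simp only [Pi.add_apply]; ring) measurableSet_Ioi

theorem integral_affine_mul_exp_neg (A B : ℝ) :
    ∫ s in Ioi 0, (A + B * (s - 1)) * exp (-s) = A := by
  have h : (fun s : ℝ => (A + B * (s - 1)) * exp (-s)) =
      fun s => (A - B) * exp (-s) + B * (s * exp (-s)) := by
    funext s; ring
  rw [h, integral_add (integrableOn_Ioi_exp_neg.const_mul _)
      (integrableOn_Ioi_zero_mul_exp_neg.const_mul _), integral_const_mul, integral_const_mul,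
    integral_exp_neg_Ioi_zero, integral_Ioi_zero_mul_exp_neg]
  ring

theorem integrableOn_Ioi_rpow_mul_exp_neg (c : ℝ) {x : ℝ} (hx : 0 < x) :
    IntegrableOn (fun t : ℝ => t ^ c * exp (-t)) (Ioi x) := by
  refine integrable_of_isBigO_exp_neg one_half_pos ?_ ?_
  · exact (continuousOn_id.rpow_const fun t ht => Or.inl (hx.trans_le ht).ne').mul
      continuousOn_id.neg.rexp
  · simpa only [mul_comm] using (Gamma_integrand_isLittleO c).isBigO

theorem one_add_mul_self_le_rpow_one_add_of_nonpos {u : ℝ} (hu : -1 < u) {p : ℝ} (hp : p ≤ 0) :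
    1 + p * u ≤ (1 + u) ^ p := by
  have hu' : 0 < 1 + u := by linarith
  have hlog : log (1 + u) ≤ u := by linarith [log_le_sub_one_of_pos hu']
  calc 1 + p * u ≤ 1 + p * log (1 + u) := by nlinarith
    _ ≤ exp (p * log (1 + u)) := by linarith [add_one_le_exp (p * log (1 + u))]
    _ = (1 + u) ^ p := by rw [rpow_def_of_pos hu', mul_comm]

section Tangent

variable {y t p : ℝ}

theorem rpow_eq_rpow_mul_one_add_rpow (hy : 0 < y) (ht : 0 ≤ t) :
    t ^ p = y ^ p * (1 + (t - y) / y) ^ p := by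
  have h : 1 + (t - y) / y = t / y := by field_simp; ring
  rw [h, div_rpow ht hy.le]
  field_simp [(rpow_pos_of_pos hy p).ne']

theorem rpow_tangent_eq (hy : 0 < y) :
    y ^ p + p * y ^ (p - 1) * (t - y) = y ^ p * (1 + p * ((t - y) / y)) := by
  rw [rpow_sub_one hy.ne']
  field_simp

theorem rpow_tangent_le (hy : 0 < y) (ht : 0 < t) (hp : p ≤ 0 ∨ 1 ≤ p) :
    y ^ p + p * y ^ (p - 1) * (t - y) ≤ t ^ p := by
  have hu : -1 < (t - y) / y := by rw [lt_div_iff₀ hy]; linarith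
  rw [rpow_tangent_eq hy, rpow_eq_rpow_mul_one_add_rpow hy ht.le]
  refine mul_le_mul_of_nonneg_left ?_ (rpow_nonneg hy.le p)
  rcases hp with hp | hp
  · exact one_add_mul_self_le_rpow_one_add_of_nonpos hu hp
  · exact one_add_mul_self_le_rpow_one_add hu.le hp

theorem rpow_le_tangent (hy : 0 < y) (ht : 0 ≤ t) (hp₀ : 0 ≤ p) (hp₁ : p ≤ 1) :
    t ^ p ≤ y ^ p + p * y ^ (p - 1) * (t - y) := by
  have hu : -1 ≤ (t - y) / y := by rw [le_div_iff₀ hy]; linarith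
  rw [rpow_tangent_eq hy, rpow_eq_rpow_mul_one_add_rpow hy ht]
  exact mul_le_mul_of_nonneg_left (rpow_one_add_le_one_add_mul_self hu hp₀ hp₁)
    (rpow_nonneg hy.le p)

end Tangent

noncomputable def upperGamma (a x : ℝ) : ℝ := ∫ t in Ioi x, t ^ (a - 1) * exp (-t)

noncomputable def scaledUpperGamma (a x : ℝ) : ℝ := ∫ s in Ioi 0, (x + s) ^ (a - 1) * exp (-s)

theorem scaledUpperGamma_eq_exp_mul_upperGamma (a x : ℝ) :
    scaledUpperGamma a x = exp x * upperGamma a x := by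
  rw [upperGamma, setIntegral_Ioi_eq_integral_Ioi_zero_add, ← integral_const_mul]
  refine setIntegral_congr_fun measurableSet_Ioi fun s _ => ?_
  rw [neg_add, exp_add, exp_neg x]
  field_simp

theorem integrableOn_scaledUpperGamma_integrand (a : ℝ) {x : ℝ} (hx : 0 < x) :
    IntegrableOn (fun s : ℝ => (x + s) ^ (a - 1) * exp (-s)) (Ioi 0) := by
  have h := ((integrableOn_Ioi_iff_integrableOn_Ioi_zero_add _ x).mp
    (integrableOn_Ioi_rpow_mul_exp_neg (a - 1) hx)).const_mul (exp x)
  refine IntegrableOn.congr_fun h (fun s _ => ?_) measurableSet_Ioi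
  rw [neg_add, exp_add, exp_neg x]
  field_simp

theorem Gamma_mul_gammaSurv {a x : ℝ} (ha : 0 < a) (hx : 0 ≤ x) :
    Gamma a * gammaSurv a x = upperGamma a x := by
  have hint : IntegrableOn (fun t : ℝ => t ^ (a - 1) * exp (-t)) (Ioi 0) :=
    (GammaIntegral_convergent ha).congr_fun (fun t _ => mul_comm _ _) measurableSet_Ioi
  have hGamma : Gamma a = (∫ t in Ioc 0 x, t ^ (a - 1) * exp (-t)) + upperGamma a x := by
    rw [Gamma_eq_integral ha, upperGamma, ← setIntegral_union (Ioc_disjoint_Ioi le_rfl)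
      measurableSet_Ioi (hint.mono_set Ioc_subset_Ioi_self) (hint.mono_set (Ioi_subset_Ioi hx)),
      Ioc_union_Ioi_eq_Ioi hx]
    exact setIntegral_congr_fun measurableSet_Ioi fun t _ => mul_comm _ _
  rw [gammaSurv, gammaCDF, intervalIntegral.integral_of_le hx, mul_sub, mul_one,
    mul_inv_cancel_left₀ (Gamma_pos_of_pos ha).ne', hGamma, add_sub_cancel_left]

theorem upperGamma_add_one (a : ℝ) {x : ℝ} (hx : 0 < x) :
    upperGamma (a + 1) x = x ^ a * exp (-x) + a * upperGamma a x := by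
  have hderiv : ∀ t ∈ Ici x, HasDerivAt (fun t => -(t ^ a * exp (-t)))
      (t ^ a * exp (-t) - a * (t ^ (a - 1) * exp (-t))) t := fun t ht => by
    refine (((hasDerivAt_rpow_const (Or.inl (hx.trans_le ht).ne')).mul
      (hasDerivAt_neg t).exp).neg).congr_deriv ?_
    ring
  have hlim : Tendsto (fun t : ℝ => -(t ^ a * exp (-t))) atTop (𝓝 (-0)) := by
    simpa using (tendsto_rpow_mul_exp_neg_mul_atTop_nhds_zero a 1 one_pos).neg
  have hint := integrableOn_Ioi_rpow_mul_exp_neg a hx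
  have hint' := (integrableOn_Ioi_rpow_mul_exp_neg (a - 1) hx).const_mul a
  have h := integral_Ioi_of_hasDerivAt_of_tendsto' hderiv (hint.sub hint') hlim
  rw [integral_sub hint hint', integral_const_mul] at h
  rw [upperGamma, upperGamma, add_sub_cancel_right]
  linarith

theorem scaledUpperGamma_add_one (a : ℝ) {x : ℝ} (hx : 0 < x) :
    scaledUpperGamma (a + 1) x = x ^ a + a * scaledUpperGamma a x := by
  rw [scaledUpperGamma_eq_exp_mul_upperGamma, scaledUpperGamma_eq_exp_mul_upperGamma,
    upperGamma_add_one a hx, exp_neg]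
  field_simp

theorem rpow_le_scaledUpperGamma {a x : ℝ} (hx : 0 < x) (ha : a ≤ 1 ∨ 2 ≤ a) :
    (x + 1) ^ (a - 1) ≤ scaledUpperGamma a x := by
  rw [← integral_affine_mul_exp_neg ((x + 1) ^ (a - 1)) ((a - 1) * (x + 1) ^ (a - 1 - 1))]
  refine setIntegral_mono_on (integrableOn_affine_mul_exp_neg _ _)
    (integrableOn_scaledUpperGamma_integrand a hx) measurableSet_Ioi fun s hs => ?_
  have h := rpow_tangent_le (p := a - 1) (by linarith : 0 < x + 1)
    (by linarith [mem_Ioi.mp hs] : 0 < x + s)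
    (by rcases ha with h | h <;> [left; right] <;> linarith)
  rw [add_sub_add_left_eq_sub] at h
  exact mul_le_mul_of_nonneg_right h (exp_pos _).le

theorem scaledUpperGamma_le_rpow {a x : ℝ} (hx : 0 < x) (ha₁ : 1 ≤ a) (ha₂ : a ≤ 2) :
    scaledUpperGamma a x ≤ (x + 1) ^ (a - 1) := by
  rw [← integral_affine_mul_exp_neg ((x + 1) ^ (a - 1)) ((a - 1) * (x + 1) ^ (a - 1 - 1))]
  refine setIntegral_mono_on (integrableOn_scaledUpperGamma_integrand a hx)
    (integrableOn_affine_mul_exp_neg _ _) measurableSet_Ioi fun s hs => ?_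
  have h := rpow_le_tangent (p := a - 1) (by linarith : 0 < x + 1)
    (by linarith [mem_Ioi.mp hs] : 0 ≤ x + s) (by linarith) (by linarith)
  rw [add_sub_add_left_eq_sub] at h
  exact mul_le_mul_of_nonneg_right h (exp_pos _).le

theorem scaledUpperGamma_monotoneOn {a : ℝ} (ha : 1 ≤ a) :
    MonotoneOn (scaledUpperGamma a) (Ioi 0) := fun x hx y _ hxy =>
  setIntegral_mono_on (integrableOn_scaledUpperGamma_integrand a hx)
    (integrableOn_scaledUpperGamma_integrand a (lt_of_lt_of_le hx hxy)) measurableSet_Ioi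
    fun s hs => mul_le_mul_of_nonneg_right
      (rpow_le_rpow (by linarith [mem_Ioi.mp hx, mem_Ioi.mp hs]) (by linarith) (by linarith))
      (exp_pos _).le

/- The derivative of `t ↦ -t ^ a e^{-t} / (t - a + 1)` is
`t ^ (a - 1) e^{-t} (1 + (a - 1) / (t - a + 1)²) ≥ t ^ (a - 1) e^{-t}`. -/
theorem upperGamma_le {a x : ℝ} (ha : 1 ≤ a) (hax : a - 1 < x) :
    upperGamma a x ≤ x ^ a * exp (-x) / (x - a + 1) := by
  have hx : 0 < x := by linarith
  set f' : ℝ → ℝ := fun t => t ^ (a - 1) * exp (-t) * (1 + (a - 1) / (t - a + 1) ^ 2)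
  have hderiv : ∀ t ∈ Ici x, HasDerivAt (fun t => -(t ^ a * exp (-t) / (t - a + 1))) (f' t) t := by
    intro t ht
    have ht₀ : 0 < t := hx.trans_le ht
    have hD : t - a + 1 ≠ 0 := by linarith [mem_Ici.mp ht]
    refine ((((hasDerivAt_rpow_const (p := a) (Or.inl ht₀.ne')).mul (hasDerivAt_neg t).exp).div
      (((hasDerivAt_id t).sub_const a).add_const 1) hD).neg).congr_deriv ?_
    simp only [f', rpow_sub_one ht₀.ne', id, Pi.mul_apply]
    field_simp
    ring
  have hg_nonneg : ∀ t ∈ Ioi x, 0 ≤ t ^ (a - 1) * exp (-t) := fun t ht =>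
    mul_nonneg (rpow_nonneg (hx.trans ht).le _) (exp_pos _).le
  have hf'_ge : ∀ t ∈ Ioi x, t ^ (a - 1) * exp (-t) ≤ f' t := fun t ht =>
    le_mul_of_one_le_right (hg_nonneg t ht)
      (le_add_of_nonneg_right (div_nonneg (by linarith) (sq_nonneg _)))
  have hf'_nonneg : ∀ t ∈ Ioi x, 0 ≤ f' t := fun t ht => (hg_nonneg t ht).trans (hf'_ge t ht)
  have hlim : Tendsto (fun t => -(t ^ a * exp (-t) / (t - a + 1))) atTop (𝓝 0) := by
    have h₁ : Tendsto (fun t : ℝ => t ^ a * exp (-t)) atTop (𝓝 0) := by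
      simpa using tendsto_rpow_mul_exp_neg_mul_atTop_nhds_zero a 1 one_pos
    have h₂ : Tendsto (fun t : ℝ => t - a + 1) atTop atTop :=
      tendsto_atTop_add_const_right _ 1 (tendsto_atTop_add_const_right _ (-a) tendsto_id)
    simpa [div_eq_mul_inv] using (h₁.mul h₂.inv_tendsto_atTop).neg
  calc upperGamma a x ≤ ∫ t in Ioi x, f' t :=
        setIntegral_mono_on (integrableOn_Ioi_rpow_mul_exp_neg (a - 1) hx)
          (integrableOn_Ioi_deriv_of_nonneg' hderiv hf'_nonneg hlim) measurableSet_Ioi hf'_ge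
    _ = x ^ a * exp (-x) / (x - a + 1) := by
        rw [integral_Ioi_of_hasDerivAt_of_nonneg' hderiv hf'_nonneg hlim]
        ring

theorem scaledUpperGamma_le {a x : ℝ} (ha : 1 ≤ a) (hax : a - 1 < x) :
    scaledUpperGamma a x ≤ x ^ a / (x - a + 1) := by
  rw [scaledUpperGamma_eq_exp_mul_upperGamma]
  calc exp x * upperGamma a x ≤ exp x * (x ^ a * exp (-x) / (x - a + 1)) :=
        mul_le_mul_of_nonneg_left (upperGamma_le ha hax) (exp_pos x).le
    _ = x ^ a / (x - a + 1) := by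
        rw [exp_neg]
        field_simp

theorem gamma_survival_bounds (a : ℝ) (ha : 0 < a) (x : ℝ) (hx : 0 < x) :
    ((a ≤ 1 ∨ (2 ≤ a ∧ a ≤ 3)) →
      (x + 1) ^ (a - 1) ≤ Real.Gamma a * Real.exp x * gammaSurv a x) ∧
    ((1 ≤ a ∧ a ≤ 2) →
      Real.Gamma a * Real.exp x * gammaSurv a x ≤ (x + 1) ^ (a - 1)) ∧
    ((a ≤ 1 ∨ (2 ≤ a ∧ a ≤ 3)) →
      Real.Gamma a * Real.exp x * gammaSurv a x
        ≤ x ^ (a - 1) + (a - 1) * (x + 1) ^ (a - 2)) ∧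
    (((1 ≤ a ∧ a ≤ 2) ∨ 3 ≤ a) →
      x ^ (a - 1) + (a - 1) * (x + 1) ^ (a - 2)
        ≤ Real.Gamma a * Real.exp x * gammaSurv a x) ∧
    (3 ≤ a →
      Real.Gamma a * Real.exp x * gammaSurv a x
        ≤ if x ≤ a then a ^ a else x ^ a / (x - a + 1)) := by
  have hJ : Gamma a * exp x * gammaSurv a x = scaledUpperGamma a x := by
    rw [mul_right_comm, Gamma_mul_gammaSurv ha hx.le, scaledUpperGamma_eq_exp_mul_upperGamma,
      mul_comm]
  have hrec : scaledUpperGamma a x = x ^ (a - 1) + (a - 1) * scaledUpperGamma (a - 1) x := by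
    simpa using scaledUpperGamma_add_one (a - 1) hx
  have hsub : a - 1 - 1 = a - 2 := by ring
  have hlower := rpow_le_scaledUpperGamma (a := a - 1) hx
  have hupper := scaledUpperGamma_le_rpow (a := a - 1) hx
  rw [hsub] at hlower hupper
  rw [hJ]
  refine ⟨fun h => rpow_le_scaledUpperGamma hx
      (by rcases h with h | h <;> [left; right] <;> linarith),
    fun h => scaledUpperGamma_le_rpow hx h.1 h.2, fun h => ?_, fun h => ?_, fun h => ?_⟩
  · rw [hrec, add_le_add_iff_left]
    rcases h with h | h
    · exact mul_le_mul_of_nonpos_left (hlower (Or.inl (by linarith))) (by linarith)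
    · exact mul_le_mul_of_nonneg_left (hupper (by linarith) (by linarith)) (by linarith)
  · rw [hrec, add_le_add_iff_left]
    refine mul_le_mul_of_nonneg_left (hlower ?_) (by rcases h with h | h <;> linarith)
    rcases h with h | h <;> [left; right] <;> linarith
  · split_ifs with hxa
    · calc scaledUpperGamma a x ≤ scaledUpperGamma a a :=
            scaledUpperGamma_monotoneOn (by linarith) hx (mem_Ioi.mpr (by linarith)) hxa
        _ ≤ a ^ a / (a - a + 1) := scaledUpperGamma_le (by linarith) (by linarith)
        _ = a ^ a := by simp
    · exact scaledUpperGamma_le (by linarith) (by linarith)
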